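/- arXiv:2511.08078 — 2 statements merged into one kernel-verified Lean document; each statement's English description precedes it below -/
import Mathlib

section
/- If the maximal value of the induced MDP over a set of assignments η is below the threshold ν, then every assignment θ in η has induced Markov chain value below ν. Formally: if V^max(C[η]) < ν then for all θ ∈ η, V(C[θ]) < ν. -/
open scoped ENNReal Classical

/-- A finite Markov chain with states `S`, an initial state, transition
probabilities and nonnegative state rewards. -/
structure MC (S : Type) [Fintype S] where
  init : S
  tr : S → S → NNReal
  rew : S → NNReal

namespace MC

variable {S : Type} [Fintype S]

/-- The `n`-step state distribution of a Markov chain. -/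
noncomputable def dist (D : MC S) : ℕ → S → NNReal
  | 0 => fun s => if s = D.init then 1 else 0
  | n + 1 => fun s => ∑ t, dist D n t * D.tr t s

/-- The expected total (undiscounted, indefinite-horizon) reward of a Markov chain:
`E[∑_i R(s_i)] = ∑_n ∑_s Pr_n(s) · R(s)`. -/
noncomputable def val (D : MC S) : ℝ≥0∞ :=
  ∑' n, ∑ s, (D.dist n s : ℝ≥0∞) * (D.rew s : ℝ≥0∞)

/-- States reachable (with positive probability) from the initial state. -/
inductive Reach (D : MC S) : S → Prop
  | init : Reach D D.init
  | step {s t : S} : Reach D s → 0 < D.tr s t → Reach D t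

/-- A state is transient iff the expected number of visits to it is finite. -/
def Transient (D : MC S) (s : S) : Prop := (∑' n, (D.dist n s : ℝ≥0∞)) < ⊤

end MC

/-- A finite Markov decision process with available-action sets `act`,
partial transition function `tr` and state rewards `rew`. -/
structure MDP (S A : Type) [Fintype S] [Fintype A] where
  init : S
  act : S → Finset A
  tr : S → A → S → NNReal
  rew : S → NNReal

namespace MDP

variable {S A : Type} [Fintype S] [Fintype A]

/-- A deterministic memoryless policy selects an available action in every state. -/
def IsPolicy (M : MDP S A) (π : S → A) : Prop := ∀ s, π s ∈ M.act s

/-- The Markov chain induced by a (memoryless deterministic) policy. -/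
def induce (M : MDP S A) (π : S → A) : MC S :=
  ⟨M.init, fun s => M.tr s (π s), M.rew⟩

/-- The maximal value `V^max(M) = max_π V(M[π])` over deterministic memoryless policies. -/
noncomputable def vmax (M : MDP S A) : ℝ≥0∞ :=
  ⨆ π : {π : S → A // M.IsPolicy π}, (M.induce π.1).val

/-- The minimal value `V^min(M) = min_π V(M[π])` over deterministic memoryless policies. -/
noncomputable def vmin (M : MDP S A) : ℝ≥0∞ :=
  ⨅ π : {π : S → A // M.IsPolicy π}, (M.induce π.1).val

/-- States of the MDP reachable (via available actions, with positive probability)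
from the initial state. -/
inductive Reach (M : MDP S A) : S → Prop
  | init : Reach M M.init
  | step {s t : S} {α : A} : Reach M s → α ∈ M.act s → 0 < M.tr s α t → Reach M t

end MDP

/-- A colored MDP `C = (M, 𝕍, κ)`: an MDP together with a finite constrained
parameter space of assignments `θ : P → ℤ` and a coloring `κ` such that every
assignment selects exactly one available action in every state. -/
structure CMDP (S A P : Type) [Fintype S] [Fintype A] where
  M : MDP S A
  space : Set (P → ℤ)
  finite : space.Finite
  coloring : S → A → Set (P → ℤ)
  unique : ∀ θ ∈ space, ∀ s : S, ∃! α : A, α ∈ M.act s ∧ θ ∈ coloring s α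

namespace CMDP

variable {S A P : Type} [Fintype S] [Fintype A] [Nonempty A]

/-- The induced MDP `C[η]`: keep at each state exactly the actions `α` with
`η ∩ κ(s,α) ≠ ∅`. -/
noncomputable def induced (C : CMDP S A P) (η : Set (P → ℤ)) : MDP S A where
  init := C.M.init
  act := fun s => (C.M.act s).filter fun α => (η ∩ C.coloring s α).Nonempty
  tr := C.M.tr
  rew := C.M.rew

/-- The (unique, for `θ ∈ 𝕍`) policy selected by an assignment `θ`. -/
noncomputable def policyOf (C : CMDP S A P) (θ : P → ℤ) : S → A := fun s =>
  if h : ∃ α : A, α ∈ C.M.act s ∧ θ ∈ C.coloring s α then h.choose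
  else Classical.arbitrary A

/-- The Markov chain `C[θ]` induced by a single assignment `θ`. -/
noncomputable def chain (C : CMDP S A P) (θ : P → ℤ) : MC S :=
  C.M.induce (C.policyOf θ)

/-- The value `V(C[θ])` of the Markov chain induced by assignment `θ`. -/
noncomputable def val (C : CMDP S A P) (θ : P → ℤ) : ℝ≥0∞ :=
  (C.chain θ).val

end CMDP

namespace MDP

variable {S A : Type} [Fintype S] [Fintype A]

theorem val_induce_le_vmax (M : MDP S A) {π : S → A} (hπ : M.IsPolicy π) :
    (M.induce π).val ≤ M.vmax :=
  le_iSup (fun π : {π : S → A // M.IsPolicy π} => (M.induce π.1).val) ⟨π, hπ⟩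

end MDP

namespace CMDP

variable {S A P : Type} [Fintype S] [Fintype A] [Nonempty A]

theorem policyOf_spec (C : CMDP S A P) {θ : P → ℤ} (hθ : θ ∈ C.space) (s : S) :
    C.policyOf θ s ∈ C.M.act s ∧ θ ∈ C.coloring s (C.policyOf θ s) := by
  have hex : ∃ α, α ∈ C.M.act s ∧ θ ∈ C.coloring s α := (C.unique θ hθ s).exists
  simpa only [policyOf, dif_pos hex] using hex.choose_spec

theorem isPolicy_induced_policyOf (C : CMDP S A P) {η : Set (P → ℤ)} {θ : P → ℤ}
    (hθη : θ ∈ η) (hθ : θ ∈ C.space) : (C.induced η).IsPolicy (C.policyOf θ) := fun s =>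
  have ⟨hact, hcol⟩ := C.policyOf_spec hθ s
  Finset.mem_filter.2 ⟨hact, θ, hθη, hcol⟩

theorem val_le_vmax_induced (C : CMDP S A P) {η : Set (P → ℤ)} {θ : P → ℤ}
    (hθη : θ ∈ η) (hθ : θ ∈ C.space) : C.val θ ≤ (C.induced η).vmax :=
  (C.induced η).val_induce_le_vmax (C.isPolicy_induced_policyOf hθη hθ)

end CMDP

/-- If `V^max(C[η]) < ν` then `V(C[θ]) < ν` for every `θ ∈ η`. -/
theorem stmt_0 {S A P : Type} [Fintype S] [Fintype A] [Nonempty A]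
    (C : CMDP S A P) (η : Set (P → ℤ)) (hη : η ⊆ C.space) (ν : ℝ≥0∞)
    (h : (C.induced η).vmax < ν) :
    ∀ θ ∈ η, C.val θ < ν := fun _ hθ =>
  (C.val_le_vmax_induced hθ (hη hθ)).trans_lt h
end

section
/- If the minimal value of the induced MDP over a set of assignments η is at least the threshold ν, then every assignment θ ∈ η satisfies V(C[θ]) ≥ ν. -/
open scoped ENNReal Classical

theorem MDP.vmin_le_val_induce {S A : Type} [Fintype S] [Fintype A] (M : MDP S A)
    {π : S → A} (hπ : M.IsPolicy π) : M.vmin ≤ (M.induce π).val :=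
  iInf_le (fun π : {π : S → A // M.IsPolicy π} => (M.induce π.1).val) ⟨π, hπ⟩

namespace CMDP

variable {S A P : Type} [Fintype S] [Fintype A] [Nonempty A]

theorem vmin_induced_le_val (C : CMDP S A P) {η : Set (P → ℤ)} {θ : P → ℤ}
    (hθη : θ ∈ η) (hθ : θ ∈ C.space) : (C.induced η).vmin ≤ C.val θ :=
  (C.induced η).vmin_le_val_induce (C.isPolicy_induced_policyOf hθη hθ)

end CMDP

/-- If `V^min(C[η]) ≥ ν` then `V(C[θ]) ≥ ν` for every `θ ∈ η`. -/
theorem stmt_1 {S A P : Type} [Fintype S] [Fintype A] [Nonempty A]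
    (C : CMDP S A P) (η : Set (P → ℤ)) (hη : η ⊆ C.space) (ν : ℝ≥0∞)
    (h : ν ≤ (C.induced η).vmin) :
    ∀ θ ∈ η, ν ≤ C.val θ := by
  intro θ hθ
  exact h.trans (C.vmin_induced_le_val hθ (hη hθ))
end
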